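/- arXiv:2110.03684 — 2 statements merged into one kernel-verified Lean document; each statement's English description precedes it below -/
import Mathlib

section
/- For finite metric measure spaces (X, d_X, μ_X), (Y, d_Y, μ_Y), and (Z, d_Z, μ_Z), where μ_X, μ_Y, μ_Z are probability mass functions, the Gromov-Wasserstein distance satisfies the triangle inequality: GW((X, d_X, μ_X), (Z, d_Z, μ_Z)) ≤ GW((X, d_X, μ_X), (Y, d_Y, μ_Y)) + GW((Y, d_Y, μ_Y), (Z, d_Z, μ_Z)). -/
open Finset

/-- `d : X × X → ℝ` is a metric on `X`. -/
def IsMetric {X : Type*} (d : X × X → ℝ) : Prop :=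
  (∀ x y, d (x, y) = 0 ↔ x = y) ∧ (∀ x y, d (x, y) = d (y, x)) ∧
    (∀ x y z, d (x, z) ≤ d (x, y) + d (y, z))

/-- The set of couplings between two finite measures. -/
def couplings {X Y : Type*} [Fintype X] [Fintype Y]
    (μX : X → NNReal) (μY : Y → NNReal) : Set (X × Y → NNReal) :=
  {u | (∀ x, ∑ y, u (x, y) = μX x) ∧ (∀ y, ∑ x, u (x, y) = μY y)}

/-- The Gromov-Wasserstein objective of a coupling `u`. -/
noncomputable def GWobj {X Y : Type*} [Fintype X] [Fintype Y]
    (dX : X × X → ℝ) (dY : Y × Y → ℝ) (u : X × Y → NNReal) : ℝ :=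
  ∑ x, ∑ x', ∑ y, ∑ y',
    |dX (x, x') - dY (y, y')| ^ 2 * (u (x, y) : ℝ) * (u (x', y') : ℝ)

/-- The squared Gromov-Wasserstein distance between finite metric measure spaces. -/
noncomputable def GWsq {X Y : Type*} [Fintype X] [Fintype Y]
    (dX : X × X → ℝ) (μX : X → NNReal) (dY : Y × Y → ℝ) (μY : Y → NNReal) : ℝ :=
  sInf (GWobj dX dY '' couplings μX μY)

/-- The Gromov-Wasserstein distance between finite metric measure spaces. -/
noncomputable def GW {X Y : Type*} [Fintype X] [Fintype Y]
    (dX : X × X → ℝ) (μX : X → NNReal) (dY : Y × Y → ℝ) (μY : Y → NNReal) : ℝ :=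
  Real.sqrt (GWsq dX μX dY μY)


lemma weighted_minkowski {ι : Type*} [Fintype ι] (a b m : ι → ℝ) (hm : ∀ i, 0 ≤ m i) :
    ∑ i, (|a i| + |b i|) ^ 2 * m i ≤
      (Real.sqrt (∑ i, a i ^ 2 * m i) + Real.sqrt (∑ i, b i ^ 2 * m i)) ^ 2 := by
  set A := ∑ i, a i ^ 2 * m i with hA'
  set B := ∑ i, b i ^ 2 * m i with hB'
  have hA : 0 ≤ A := Finset.sum_nonneg fun i _ => mul_nonneg (sq_nonneg _) (hm i)
  have hB : 0 ≤ B := Finset.sum_nonneg fun i _ => mul_nonneg (sq_nonneg _) (hm i)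
  have cs : ∑ i, |a i| * |b i| * m i ≤ Real.sqrt A * Real.sqrt B := by
    have h1 := Real.sum_mul_le_sqrt_mul_sqrt Finset.univ
      (fun i => |a i| * Real.sqrt (m i)) (fun i => |b i| * Real.sqrt (m i))
    have e1 : ∀ i : ι, (|a i| * Real.sqrt (m i)) * (|b i| * Real.sqrt (m i))
        = |a i| * |b i| * m i := by
      intro i
      rw [show (|a i| * Real.sqrt (m i)) * (|b i| * Real.sqrt (m i))
          = |a i| * |b i| * (Real.sqrt (m i) * Real.sqrt (m i)) by ring,
        Real.mul_self_sqrt (hm i)]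
    have e2 : ∀ i : ι, (|a i| * Real.sqrt (m i)) ^ 2 = a i ^ 2 * m i := by
      intro i
      rw [mul_pow, sq_abs, Real.sq_sqrt (hm i)]
    have e3 : ∀ i : ι, (|b i| * Real.sqrt (m i)) ^ 2 = b i ^ 2 * m i := by
      intro i
      rw [mul_pow, sq_abs, Real.sq_sqrt (hm i)]
    simpa [e1, e2, e3] using h1
  have expand : ∑ i, (|a i| + |b i|) ^ 2 * m i
      = A + 2 * (∑ i, |a i| * |b i| * m i) + B := by
    rw [hA', hB', Finset.mul_sum, ← Finset.sum_add_distrib, ← Finset.sum_add_distrib]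
    refine Finset.sum_congr rfl fun i _ => ?_
    rw [add_sq, sq_abs, sq_abs]
    ring
  rw [expand, add_sq, Real.sq_sqrt hA, Real.sq_sqrt hB]
  linarith

lemma GWobj_eq {X Y : Type*} [Fintype X] [Fintype Y] (dX : X × X → ℝ) (dY : Y × Y → ℝ)
    (u : X × Y → NNReal) :
    GWobj dX dY u = ∑ p : (X × Y) × (X × Y),
      |dX (p.1.1, p.2.1) - dY (p.1.2, p.2.2)| ^ 2 * (u p.1 : ℝ) * (u p.2 : ℝ) := by
  rw [Fintype.sum_prod_type]
  simp only [Fintype.sum_prod_type]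
  unfold GWobj
  refine Finset.sum_congr rfl fun x _ => ?_
  exact Finset.sum_comm

lemma sum_proj {Q R : Type*} [Fintype Q] [Fintype R] (P : Q → ℝ) (U : R → ℝ) (pr : Q → R)
    (h : ∀ φ : R → ℝ, ∑ t, φ (pr t) * P t = ∑ r, φ r * U r) (G : R × R → ℝ) :
    ∑ p : Q × Q, G (pr p.1, pr p.2) * P p.1 * P p.2
      = ∑ p : R × R, G p * U p.1 * U p.2 := by
  rw [Fintype.sum_prod_type, Fintype.sum_prod_type]
  have step1 : ∀ t : Q, ∑ t' : Q, G (pr t, pr t') * P t * P t'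
      = ∑ r' : R, G (pr t, r') * P t * U r' := fun t =>
    h (fun r' => G (pr t, r') * P t)
  calc ∑ t : Q, ∑ t' : Q, G (pr t, pr t') * P t * P t'
      = ∑ t : Q, ∑ r' : R, G (pr t, r') * P t * U r' := Finset.sum_congr rfl fun t _ => step1 t
    _ = ∑ r' : R, ∑ t : Q, G (pr t, r') * P t * U r' := Finset.sum_comm
    _ = ∑ r' : R, ∑ t : Q, (G (pr t, r') * U r') * P t := by
        refine Finset.sum_congr rfl fun r' _ => Finset.sum_congr rfl fun t _ => by ring
    _ = ∑ r' : R, ∑ r : R, (G (r, r') * U r') * U r := Finset.sum_congr rfl fun r' _ =>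
        h (fun r => G (r, r') * U r')
    _ = ∑ r : R, ∑ r' : R, G (r, r') * U r * U r' := by
        rw [Finset.sum_comm]
        exact Finset.sum_congr rfl fun r _ => Finset.sum_congr rfl fun r' _ => by ring

lemma sqrt_add_le' {x y : ℝ} (hx : 0 ≤ x) (hy : 0 ≤ y) :
    Real.sqrt (x + y) ≤ Real.sqrt x + Real.sqrt y := by
  have h : x + y ≤ (Real.sqrt x + Real.sqrt y) ^ 2 := by
    rw [add_sq, Real.sq_sqrt hx, Real.sq_sqrt hy]
    nlinarith [Real.sqrt_nonneg x, Real.sqrt_nonneg y]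
  calc Real.sqrt (x + y) ≤ Real.sqrt ((Real.sqrt x + Real.sqrt y) ^ 2) := Real.sqrt_le_sqrt h
    _ = Real.sqrt x + Real.sqrt y := Real.sqrt_sq (by positivity)

lemma GWobj_nonneg {X Y : Type*} [Fintype X] [Fintype Y] (dX : X × X → ℝ) (dY : Y × Y → ℝ)
    (u : X × Y → NNReal) : 0 ≤ GWobj dX dY u := by
  unfold GWobj
  positivity

lemma exists_glue {X Y Z : Type*} [Fintype X] [Fintype Y] [Fintype Z]
    (dX : X × X → ℝ) (μX : X → NNReal) (dY : Y × Y → ℝ) (μY : Y → NNReal)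
    (dZ : Z × Z → ℝ) (μZ : Z → NNReal)
    {u : X × Y → NNReal} {v : Y × Z → NNReal}
    (hu : u ∈ couplings μX μY) (hv : v ∈ couplings μY μZ) :
    ∃ w ∈ couplings μX μZ, GWobj dX dZ w ≤
      (Real.sqrt (GWobj dX dY u) + Real.sqrt (GWobj dY dZ v)) ^ 2 := by
  obtain ⟨hu1, hu2⟩ := hu
  obtain ⟨hv1, hv2⟩ := hv
  set π : X × Y × Z → NNReal := fun t => u (t.1, t.2.1) * v (t.2.1, t.2.2) / μY t.2.1 with hπ
  have hπz : ∀ (x : X) (y : Y), ∑ z, π (x, y, z) = u (x, y) := by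
    intro x y
    by_cases hy : μY y = 0
    · have hu0 : u (x, y) = 0 := by
        have h := hu2 y
        rw [hy] at h
        exact (Finset.sum_eq_zero_iff.mp h) x (Finset.mem_univ x)
      simp [hπ, hu0]
    · simp only [hπ]
      rw [← Finset.sum_div, ← Finset.mul_sum, hv1 y, mul_div_cancel_right₀ _ hy]
  have hπx : ∀ s : Y × Z, ∑ x, π (x, s) = v s := by
    intro s
    by_cases hy : μY s.1 = 0
    · have hv0 : v s = 0 := by
        have h := hv1 s.1
        rw [hy] at h
        have := (Finset.sum_eq_zero_iff.mp h) s.2 (Finset.mem_univ s.2)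
        simpa using this
      have hvs : v (s.1, s.2) = 0 := by simpa using hv0
      simp [hπ, hvs, hv0]
    · simp only [hπ]
      rw [← Finset.sum_div, ← Finset.sum_mul, hu2 s.1, mul_comm,
        mul_div_cancel_right₀ _ hy]
  set w : X × Z → NNReal := fun p => ∑ y, π (p.1, y, p.2) with hwdef
  have hw : w ∈ couplings μX μZ := by
    constructor
    · intro x
      calc ∑ z, w (x, z) = ∑ y, ∑ z, π (x, y, z) := Finset.sum_comm
        _ = ∑ y, u (x, y) := Finset.sum_congr rfl fun y _ => hπz x y
        _ = μX x := hu1 x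
    · intro z
      calc ∑ x, w (x, z) = ∑ x, ∑ y, π (x, y, z) := rfl
        _ = ∑ y, ∑ x, π (x, y, z) := Finset.sum_comm
        _ = ∑ y, v (y, z) := Finset.sum_congr rfl fun y _ => hπx (y, z)
        _ = μZ z := hv2 z
  refine ⟨w, hw, ?_⟩
  set P : X × Y × Z → ℝ := fun t => (π t : ℝ) with hP
  have M1 : ∀ φ : X × Y → ℝ, ∑ t, φ (t.1, t.2.1) * P t = ∑ r : X × Y, φ r * (u r : ℝ) := by
    intro φ
    simp only [Fintype.sum_prod_type]
    refine Finset.sum_congr rfl fun x _ => Finset.sum_congr rfl fun y _ => ?_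
    rw [← Finset.mul_sum]
    congr 1
    rw [hP]
    rw [← NNReal.coe_sum]
    exact_mod_cast hπz x y
  have M2 : ∀ ψ : Y × Z → ℝ, ∑ t, ψ t.2 * P t = ∑ r : Y × Z, ψ r * (v r : ℝ) := by
    intro ψ
    rw [Fintype.sum_prod_type, Finset.sum_comm]
    refine Finset.sum_congr rfl fun s _ => ?_
    show ∑ x : X, ψ s * P (x, s) = ψ s * (v s : ℝ)
    rw [← Finset.mul_sum]
    congr 1
    rw [hP, ← NNReal.coe_sum]
    exact_mod_cast hπx s
  have M3 : ∀ χ : X × Z → ℝ, ∑ t, χ (t.1, t.2.2) * P t = ∑ r : X × Z, χ r * (w r : ℝ) := by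
    intro χ
    simp only [Fintype.sum_prod_type]
    refine Finset.sum_congr rfl fun x _ => ?_
    rw [Finset.sum_comm]
    refine Finset.sum_congr rfl fun z _ => ?_
    rw [← Finset.mul_sum]
    congr 1
    rw [hP, hwdef, ← NNReal.coe_sum]
  have e1 : GWobj dX dY u = ∑ p : (X × Y × Z) × (X × Y × Z),
      |dX (p.1.1, p.2.1) - dY (p.1.2.1, p.2.2.1)| ^ 2 * P p.1 * P p.2 := by
    rw [GWobj_eq, ← sum_proj P (fun r : X × Y => (u r : ℝ)) (fun t => (t.1, t.2.1)) M1
      (fun p => |dX (p.1.1, p.2.1) - dY (p.1.2, p.2.2)| ^ 2)]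
  have e2 : GWobj dY dZ v = ∑ p : (X × Y × Z) × (X × Y × Z),
      |dY (p.1.2.1, p.2.2.1) - dZ (p.1.2.2, p.2.2.2)| ^ 2 * P p.1 * P p.2 := by
    rw [GWobj_eq, ← sum_proj P (fun r : Y × Z => (v r : ℝ)) (fun t => t.2) M2
      (fun p => |dY (p.1.1, p.2.1) - dZ (p.1.2, p.2.2)| ^ 2)]
  have e3 : GWobj dX dZ w = ∑ p : (X × Y × Z) × (X × Y × Z),
      |dX (p.1.1, p.2.1) - dZ (p.1.2.2, p.2.2.2)| ^ 2 * P p.1 * P p.2 := by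
    rw [GWobj_eq, ← sum_proj P (fun r : X × Z => (w r : ℝ)) (fun t => (t.1, t.2.2)) M3
      (fun p => |dX (p.1.1, p.2.1) - dZ (p.1.2, p.2.2)| ^ 2)]
  set a : (X × Y × Z) × (X × Y × Z) → ℝ :=
    fun p => dX (p.1.1, p.2.1) - dY (p.1.2.1, p.2.2.1) with ha
  set b : (X × Y × Z) × (X × Y × Z) → ℝ :=
    fun p => dY (p.1.2.1, p.2.2.1) - dZ (p.1.2.2, p.2.2.2) with hb
  set m : (X × Y × Z) × (X × Y × Z) → ℝ := fun p => P p.1 * P p.2 with hm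
  have hm0 : ∀ p, 0 ≤ m p := fun p => mul_nonneg (NNReal.coe_nonneg _) (NNReal.coe_nonneg _)
  have step1 : GWobj dX dZ w ≤ ∑ p, (|a p| + |b p|) ^ 2 * m p := by
    rw [e3]
    refine Finset.sum_le_sum fun p _ => ?_
    have htri : |dX (p.1.1, p.2.1) - dZ (p.1.2.2, p.2.2.2)| ≤ |a p| + |b p| := by
      rw [ha, hb]
      exact abs_sub_le _ _ _
    have h1 : |dX (p.1.1, p.2.1) - dZ (p.1.2.2, p.2.2.2)| ^ 2 ≤ (|a p| + |b p|) ^ 2 :=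
      pow_le_pow_left₀ (abs_nonneg _) htri 2
    calc |dX (p.1.1, p.2.1) - dZ (p.1.2.2, p.2.2.2)| ^ 2 * P p.1 * P p.2
        = |dX (p.1.1, p.2.1) - dZ (p.1.2.2, p.2.2.2)| ^ 2 * m p := by rw [hm]; ring
      _ ≤ (|a p| + |b p|) ^ 2 * m p := mul_le_mul_of_nonneg_right h1 (hm0 p)
  have step2 := weighted_minkowski a b m hm0
  have eA : ∑ p, a p ^ 2 * m p = GWobj dX dY u := by
    rw [e1]
    refine Finset.sum_congr rfl fun p _ => ?_
    rw [ha, hm, ← sq_abs (dX (p.1.1, p.2.1) - dY (p.1.2.1, p.2.2.1))]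
    ring
  have eB : ∑ p, b p ^ 2 * m p = GWobj dY dZ v := by
    rw [e2]
    refine Finset.sum_congr rfl fun p _ => ?_
    rw [hb, hm, ← sq_abs (dY (p.1.2.1, p.2.2.1) - dZ (p.1.2.2, p.2.2.2))]
    ring
  rw [eA, eB] at step2
  exact step1.trans step2

lemma GWobj_image_bddBelow {A B : Type*} [Fintype A] [Fintype B] (dA : A × A → ℝ)
    (μA : A → NNReal) (dB : B × B → ℝ) (μB : B → NNReal) :
    BddBelow (GWobj dA dB '' couplings μA μB) := by
  refine ⟨0, fun r hr => ?_⟩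
  obtain ⟨c, _, rfl⟩ := hr
  exact GWobj_nonneg _ _ _

lemma prod_coupling {A B : Type*} [Fintype A] [Fintype B] (μA : A → NNReal) (μB : B → NNReal)
    (hA : ∑ a, μA a = 1) (hB : ∑ b, μB b = 1) :
    (fun p : A × B => μA p.1 * μB p.2) ∈ couplings μA μB := by
  constructor
  · intro x
    simp only
    rw [← Finset.mul_sum, hB, mul_one]
  · intro y
    simp only
    rw [← Finset.sum_mul, hA, one_mul]

/-- The Gromov-Wasserstein distance satisfies the triangle inequality. -/
theorem GW_triangle {X Y Z : Type*} [Fintype X] [Fintype Y] [Fintype Z]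
    (dX : X × X → ℝ) (μX : X → NNReal) (dY : Y × Y → ℝ) (μY : Y → NNReal)
    (dZ : Z × Z → ℝ) (μZ : Z → NNReal)
    (hdX : IsMetric dX) (hdY : IsMetric dY) (hdZ : IsMetric dZ)
    (hμX : ∑ x, μX x = 1) (hμY : ∑ y, μY y = 1) (hμZ : ∑ z, μZ z = 1) :
    GW dX μX dZ μZ ≤ GW dX μX dY μY + GW dY μY dZ μZ := by
  have hneXY : (GWobj dX dY '' couplings μX μY).Nonempty :=
    ⟨GWobj dX dY (fun p : X × Y => μX p.1 * μY p.2),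
      ⟨fun p : X × Y => μX p.1 * μY p.2, prod_coupling μX μY hμX hμY, rfl⟩⟩
  have hneYZ : (GWobj dY dZ '' couplings μY μZ).Nonempty :=
    ⟨GWobj dY dZ (fun p : Y × Z => μY p.1 * μZ p.2),
      ⟨fun p : Y × Z => μY p.1 * μZ p.2, prod_coupling μY μZ hμY hμZ, rfl⟩⟩
  have hsqXY : 0 ≤ GWsq dX μX dY μY := by
    apply Real.sInf_nonneg
    rintro r ⟨c, _, rfl⟩
    exact GWobj_nonneg _ _ _
  have hsqYZ : 0 ≤ GWsq dY μY dZ μZ := by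
    apply Real.sInf_nonneg
    rintro r ⟨c, _, rfl⟩
    exact GWobj_nonneg _ _ _
  refine le_of_forall_pos_le_add fun δ hδ => ?_
  have hε : (0:ℝ) < (δ / 2) ^ 2 := by positivity
  obtain ⟨rA, ⟨u, hu, rfl⟩, hrA⟩ := Real.lt_sInf_add_pos hneXY hε
  obtain ⟨rB, ⟨v, hv, rfl⟩, hrB⟩ := Real.lt_sInf_add_pos hneYZ hε
  obtain ⟨w, hw, key⟩ := exists_glue dX μX dY μY dZ μZ hu hv
  have h1 : GW dX μX dZ μZ ≤ Real.sqrt (GWobj dX dZ w) :=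
    Real.sqrt_le_sqrt (csInf_le (GWobj_image_bddBelow dX μX dZ μZ) ⟨w, hw, rfl⟩)
  have h2 : Real.sqrt (GWobj dX dZ w) ≤
      Real.sqrt (GWobj dX dY u) + Real.sqrt (GWobj dY dZ v) := by
    calc Real.sqrt (GWobj dX dZ w)
        ≤ Real.sqrt ((Real.sqrt (GWobj dX dY u) + Real.sqrt (GWobj dY dZ v)) ^ 2) :=
          Real.sqrt_le_sqrt key
      _ = _ := Real.sqrt_sq (by positivity)
  have h3 : Real.sqrt (GWobj dX dY u) ≤ GW dX μX dY μY + δ / 2 := by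
    calc Real.sqrt (GWobj dX dY u)
        ≤ Real.sqrt (GWsq dX μX dY μY + (δ / 2) ^ 2) := Real.sqrt_le_sqrt hrA.le
      _ ≤ Real.sqrt (GWsq dX μX dY μY) + Real.sqrt ((δ / 2) ^ 2) :=
          sqrt_add_le' hsqXY hε.le
      _ = GW dX μX dY μY + δ / 2 := by rw [Real.sqrt_sq (by positivity), GW]
  have h4 : Real.sqrt (GWobj dY dZ v) ≤ GW dY μY dZ μZ + δ / 2 := by
    calc Real.sqrt (GWobj dY dZ v)
        ≤ Real.sqrt (GWsq dY μY dZ μZ + (δ / 2) ^ 2) := Real.sqrt_le_sqrt hrB.le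
      _ ≤ Real.sqrt (GWsq dY μY dZ μZ) + Real.sqrt ((δ / 2) ^ 2) :=
          sqrt_add_le' hsqYZ hε.le
      _ = GW dY μY dZ μZ + δ / 2 := by rw [Real.sqrt_sq (by positivity), GW]
  linarith
end

section
/- Let M_E = (S_E, A_E, R_E, P_E, p_E, γ) and M_A = (S_A, A_A, R_A, P_A, p_A, γ) be finite MDPs with the same discount factor γ ∈ [0,1). Suppose d_E^S, d_E^A, d_A^S, d_A^A are metrics on S_E, A_E, S_A, A_A respectively, and φ : S_E → S_A and ψ : A_E → A_A are bijective isometries (d_A^S(φ(s),φ(s')) = d_E^S(s,s') and d_A^A(ψ(a),ψ(a')) = d_E^A(a,a')) such that R_E(s,a) = R_A(φ(s),ψ(a)), P_E(s,a)(s') = P_A(φ(s),ψ(a))(φ(s')), and p_E(s) = p_A(φ(s)) for all s, s', a. Equip S_E × A_E and S_A × A_A with the sum metrics d_E((s,a),(s',a')) = d_E^S(s,s') + d_E^A(a,a') and d_A((s_A,a_A),(s_A',a_A')) = d_A^S(s_A,s_A') + d_A^A(a_A,a_A'). Let ρ_E* be a feasible occupancy measure in M_E maximizing expected return ∑ ρ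 R_E over feasible occupancy measures in M_E, and let ρ_GW be a feasible occupancy measure in M_A minimizing GW((S_E×A_E, d_E, ρ_E*), (S_A×A_A, d_A, ρ)) over feasible occupancy measures ρ in M_A. Then there exists a feasible occupancy measure ρ_A* in M_A maximizing expected return ∑ ρ R_A over feasible occupancy measures in M_A such that GW((S_A×A_A, d_A, ρ_A*), (S_A×A_A, d_A, ρ_GW)) = 0. -/
open Finset

/-- The sum metric on a product of a state space and an action space. -/
def sumMetric {S A : Type*} (dS : S × S → ℝ) (dA : A × A → ℝ) :
    (S × A) × (S × A) → ℝ :=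
  fun z => dS (z.1.1, z.2.1) + dA (z.1.2, z.2.2)

/-- `ρ` is a feasible occupancy measure of the finite MDP with transition
probabilities `P`, initial distribution `p` and discount factor `γ`. -/
def IsFeasible {S A : Type*} [Fintype S] [Fintype A]
    (P : S × A → S → NNReal) (p : S → NNReal) (γ : NNReal)
    (ρ : S × A → NNReal) : Prop :=
  ∀ s, ∑ a, ρ (s, a) = p s + γ * ∑ s', ∑ a', P (s', a') s * ρ (s', a')

/-- The expected return of an occupancy measure `ρ` with respect to a reward `R`. -/
noncomputable def expectedReturn {S A : Type*} [Fintype S] [Fintype A]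
    (R : S × A → ℝ) (ρ : S × A → NNReal) : ℝ :=
  ∑ s, ∑ a, (ρ (s, a) : ℝ) * R (s, a)

/-- GWIL preserves optimality: if `ρ_GW` is a feasible occupancy measure of the
agent MDP minimizing the Gromov-Wasserstein distance to an optimal occupancy
measure `ρ_E*` of an expert MDP that is related to the agent MDP through
isometric bijections matching rewards, dynamics and initial distributions,
then `ρ_GW` is at zero Gromov-Wasserstein distance from some optimal feasible
occupancy measure of the agent MDP. -/
theorem gwil_preserves_optimality
    {S_E A_E S_A A_A : Type*} [Fintype S_E] [Fintype A_E] [Fintype S_A] [Fintype A_A]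
    (R_E : S_E × A_E → ℝ) (R_A : S_A × A_A → ℝ)
    (P_E : S_E × A_E → S_E → NNReal) (P_A : S_A × A_A → S_A → NNReal)
    (p_E : S_E → NNReal) (p_A : S_A → NNReal) (γ : NNReal)
    (hP_E : ∀ sa : S_E × A_E, ∑ s', P_E sa s' = 1)
    (hP_A : ∀ sa : S_A × A_A, ∑ s', P_A sa s' = 1)
    (hp_E : ∑ s, p_E s = 1) (hp_A : ∑ s, p_A s = 1) (hγ : γ < 1)
    (dES : S_E × S_E → ℝ) (dEA : A_E × A_E → ℝ)
    (dAS : S_A × S_A → ℝ) (dAA : A_A × A_A → ℝ)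
    (hdES : IsMetric dES) (hdEA : IsMetric dEA)
    (hdAS : IsMetric dAS) (hdAA : IsMetric dAA)
    (φ : S_E → S_A) (ψ : A_E → A_A)
    (hφ : Function.Bijective φ) (hψ : Function.Bijective ψ)
    (hφiso : ∀ s s', dAS (φ s, φ s') = dES (s, s'))
    (hψiso : ∀ a a', dAA (ψ a, ψ a') = dEA (a, a'))
    (hR : ∀ (s : S_E) (a : A_E), R_E (s, a) = R_A (φ s, ψ a))
    (hP : ∀ (s s' : S_E) (a : A_E), P_E (s, a) s' = P_A (φ s, ψ a) (φ s'))
    (hp : ∀ s : S_E, p_E s = p_A (φ s))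
    (ρ_Estar : S_E × A_E → NNReal)
    (hfeasE : IsFeasible P_E p_E γ ρ_Estar)
    (hoptE : ∀ ρ : S_E × A_E → NNReal, IsFeasible P_E p_E γ ρ →
      expectedReturn R_E ρ ≤ expectedReturn R_E ρ_Estar)
    (ρ_GW : S_A × A_A → NNReal)
    (hfeasGW : IsFeasible P_A p_A γ ρ_GW)
    (hminGW : ∀ ρ : S_A × A_A → NNReal, IsFeasible P_A p_A γ ρ →
      GW (sumMetric dES dEA) ρ_Estar (sumMetric dAS dAA) ρ_GW ≤
        GW (sumMetric dES dEA) ρ_Estar (sumMetric dAS dAA) ρ) :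
    ∃ ρ_Astar : S_A × A_A → NNReal,
      IsFeasible P_A p_A γ ρ_Astar ∧
      (∀ ρ : S_A × A_A → NNReal, IsFeasible P_A p_A γ ρ →
        expectedReturn R_A ρ ≤ expectedReturn R_A ρ_Astar) ∧
      GW (sumMetric dAS dAA) ρ_Astar (sumMetric dAS dAA) ρ_GW = 0 := by
  classical
  set e1 : S_E ≃ S_A := Equiv.ofBijective φ hφ with he1
  set e2 : A_E ≃ A_A := Equiv.ofBijective ψ hψ with he2
  set Φ : S_E × A_E ≃ S_A × A_A := Equiv.prodCongr e1 e2 with hΦdef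
  have hΦap : ∀ z : S_E × A_E, Φ z = (φ z.1, ψ z.2) := fun z => rfl
  set dE := sumMetric dES dEA with hdE
  set dA := sumMetric dAS dAA with hdA
  have hdiso : ∀ z z' : S_E × A_E, dA (Φ z, Φ z') = dE (z, z') := by
    intro z z'
    simp only [hdE, hdA, sumMetric, hΦap]
    rw [hφiso, hψiso]
  -- feasibility correspondence
  have hfeas_iff : ∀ ρ : S_A × A_A → NNReal,
      IsFeasible P_A p_A γ ρ ↔ IsFeasible P_E p_E γ (fun z => ρ (Φ z)) := by
    intro ρ
    have hsum1 : ∀ sA : S_A, ∑ a : A_E, ρ (sA, ψ a) = ∑ a : A_A, ρ (sA, a) := by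
      intro sA
      exact Fintype.sum_equiv e2 _ _ (fun a => rfl)
    have hsum2 : ∀ sA : S_A,
        (∑ s' : S_E, ∑ a' : A_E, P_A (φ s', ψ a') sA * ρ (φ s', ψ a')) =
        ∑ s' : S_A, ∑ a' : A_A, P_A (s', a') sA * ρ (s', a') := by
      intro sA
      refine Fintype.sum_equiv e1 _ _ (fun s' => ?_)
      exact Fintype.sum_equiv e2 _ _ (fun a' => rfl)
    constructor
    · intro h s
      have h' := h (φ s)
      simp only [hΦap]
      rw [hsum1 (φ s)] at *
      rw [h', ← hp s, ← hsum2 (φ s)]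
      congr 2
      refine Finset.sum_congr rfl fun s' _ => Finset.sum_congr rfl fun a' _ => ?_
      rw [hP]
    · intro h sA
      obtain ⟨s, rfl⟩ := hφ.2 sA
      have h' := h s
      simp only [hΦap] at h'
      rw [hsum1 (φ s)] at h'
      rw [h', hp s]
      congr 2
      rw [← hsum2 (φ s)]
      exact Finset.sum_congr rfl fun s' _ => Finset.sum_congr rfl fun a' _ => by rw [hP]
  -- expected return correspondence
  have hER : ∀ ρ : S_A × A_A → NNReal,
      expectedReturn R_A ρ = expectedReturn R_E (fun z => ρ (Φ z)) := by
    intro ρ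
    unfold expectedReturn
    symm
    refine Fintype.sum_equiv e1 _ _ (fun s => ?_)
    refine Fintype.sum_equiv e2 _ _ (fun a => ?_)
    simp only [hΦap, hR]
    rfl
  -- the pushforward measure
  set ρ_push : S_A × A_A → NNReal := fun z => ρ_Estar (Φ.symm z) with hρp
  have hcomp : (fun z => ρ_push (Φ z)) = ρ_Estar := by
    funext z; simp [hρp]
  have hfeasP : IsFeasible P_A p_A γ ρ_push := by
    rw [hfeas_iff, hcomp]; exact hfeasE
  have hoptP : ∀ ρ : S_A × A_A → NNReal, IsFeasible P_A p_A γ ρ →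
      expectedReturn R_A ρ ≤ expectedReturn R_A ρ_push := by
    intro ρ hρ
    rw [hER ρ, hER ρ_push, hcomp]
    exact hoptE _ ((hfeas_iff ρ).1 hρ)
  -- GWobj transport
  have hGWobj : ∀ u : (S_E × A_E) × (S_A × A_A) → NNReal,
      GWobj dE dA u = GWobj dA dA (fun p => u (Φ.symm p.1, p.2)) := by
    intro u
    unfold GWobj
    refine Fintype.sum_equiv Φ _ _ (fun x => ?_)
    refine Fintype.sum_equiv Φ _ _ (fun x' => ?_)
    refine Finset.sum_congr rfl fun y _ => Finset.sum_congr rfl fun y' _ => ?_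
    simp [hdiso]
  -- image sets coincide
  have himg : GWobj dA dA '' couplings ρ_push ρ_GW
      = GWobj dE dA '' couplings ρ_Estar ρ_GW := by
    ext r
    constructor
    · rintro ⟨u', ⟨h1, h2⟩, rfl⟩
      refine ⟨fun p => u' (Φ p.1, p.2), ⟨?_, ?_⟩, ?_⟩
      · intro z
        have := h1 (Φ z)
        simpa [hρp] using this
      · intro w
        rw [← h2 w]
        exact Fintype.sum_equiv Φ _ _ (fun z => rfl)
      · rw [hGWobj]
        congr 1
        funext p
        simp
    · rintro ⟨u, ⟨h1, h2⟩, rfl⟩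
      refine ⟨fun p => u (Φ.symm p.1, p.2), ⟨?_, ?_⟩, (hGWobj u).symm⟩
      · intro z
        simp [hρp, h1 (Φ.symm z)]
      · intro w
        rw [← h2 w]
        symm
        exact Fintype.sum_equiv Φ _ _ (fun z => by simp)
  -- zero coupling between ρ_Estar and ρ_push
  have hzero : (0 : ℝ) ∈ GWobj dE dA '' couplings ρ_Estar ρ_push := by
    refine ⟨fun p => if p.2 = Φ p.1 then ρ_Estar p.1 else 0, ⟨?_, ?_⟩, ?_⟩
    · intro x
      simp
    · intro y
      have : ∀ x : S_E × A_E, (if y = Φ x then ρ_Estar x else 0)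
          = if x = Φ.symm y then ρ_Estar x else 0 := by
        intro x
        congr 1
        simp [eq_comm, Equiv.eq_symm_apply]
      calc (∑ x, if y = Φ x then ρ_Estar x else 0)
          = ∑ x, if x = Φ.symm y then ρ_Estar x else 0 :=
            Finset.sum_congr rfl fun x _ => this x
        _ = ρ_Estar (Φ.symm y) := by simp
        _ = ρ_push y := rfl
    · unfold GWobj
      refine Finset.sum_eq_zero fun x _ => Finset.sum_eq_zero fun x' _ =>
        Finset.sum_eq_zero fun y _ => Finset.sum_eq_zero fun y' _ => ?_
      by_cases h1 : y = Φ x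
      · by_cases h2 : y' = Φ x'
        · subst h1; subst h2
          rw [hdiso]
          simp
        · simp [h2]
      · simp [h1]
  have hbdd : BddBelow (GWobj dE dA '' couplings ρ_Estar ρ_push) :=
    ⟨0, by rintro r ⟨u, _, rfl⟩; exact GWobj_nonneg _ _ _⟩
  have hGWpush : GW dE ρ_Estar dA ρ_push = 0 := by
    unfold GW
    rw [Real.sqrt_eq_zero']
    exact csInf_le hbdd hzero
  have hGWEgw : GWsq dE ρ_Estar dA ρ_GW ≤ 0 := by
    have h1 := hminGW ρ_push hfeasP
    rw [hGWpush] at h1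
    have h2 : GW dE ρ_Estar dA ρ_GW = 0 :=
      le_antisymm h1 (Real.sqrt_nonneg _)
    exact Real.sqrt_eq_zero'.1 h2
  refine ⟨ρ_push, hfeasP, hoptP, ?_⟩
  show GW dA ρ_push dA ρ_GW = 0
  unfold GW
  rw [Real.sqrt_eq_zero']
  unfold GWsq
  rw [himg]
  exact hGWEgw
end
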